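/- Let x* ∈ E be a critical point of f, i.e., ∇f(x*) = 0. Then the curve γ(t) = (x*, 1/(1 + e^{-3Ct})) is a gradient flow line of the split interpolation function F on all of ℝ, and it satisfies γ(t) → (x*, 0) as t → -∞ and γ(t) → (x*, 1) as t → +∞. In particular there exists a gradient flow line of F connecting the critical point (x*, 0) of F to the critical point (x*, 1) of F. -/

import Mathlib

open Filter Topology

/-- The interpolation profile `h(s) = s³ - (3/2)s²`. -/
noncomputable def hfun (s : ℝ) : ℝ := s ^ 3 - (3 / 2) * s ^ 2

/-- The split interpolation function `F(x,s) = f(x) + C·h(s)` on `E × ℝ`, where `E × ℝ`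
carries the product (L²) inner product. -/
noncomputable def Fsplit {E : Type*} [NormedAddCommGroup E] [InnerProductSpace ℝ E]
    (f : E → ℝ) (C : ℝ) (p : WithLp 2 (E × ℝ)) : ℝ :=
  f ((WithLp.equiv 2 (E × ℝ)) p).1 + C * hfun ((WithLp.equiv 2 (E × ℝ)) p).2

/-!
The gradient of `F(x, s) = f(x) + C h(s)` splits as `(∇f(x), C h'(s))`, and
`-C h'(s) = 3C s(1 - s)`. Over a critical point `x*` the first component vanishes, so the flow
stays in the fibre `{x*} × ℝ` and its second coordinate solves the logistic equation
`s' = 3C s(1 - s)`, whose solution `1 / (1 + e^{-3Ct})` runs from `0` to `1`.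
-/

theorem hasDerivAt_hfun (s : ℝ) : HasDerivAt hfun (3 * s ^ 2 - 3 * s) s :=
  ((hasDerivAt_pow 3 s).sub ((hasDerivAt_pow 2 s).const_mul (3 / 2))).congr_deriv (by ring)

section ProdL2

variable {E F : Type*} [NormedAddCommGroup E] [InnerProductSpace ℝ E]
  [NormedAddCommGroup F] [InnerProductSpace ℝ F]

theorem WithLp.hasGradientAt_fst_add_snd [CompleteSpace E] [CompleteSpace F]
    {g : E → ℝ} {k : F → ℝ} {a : E} {b : F} {p : WithLp 2 (E × F)}
    (hg : HasGradientAt g a p.fst) (hk : HasGradientAt k b p.snd) :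
    HasGradientAt (fun q : WithLp 2 (E × F) => g q.fst + k q.snd) (WithLp.toLp 2 (a, b)) p := by
  let π := (WithLp.prodContinuousLinearEquiv 2 ℝ E F : WithLp 2 (E × F) →L[ℝ] E × F)
  have hsum := (hg.hasFDerivAt.comp p ((ContinuousLinearMap.fst ℝ E F).comp π).hasFDerivAt).add
    (hk.hasFDerivAt.comp p ((ContinuousLinearMap.snd ℝ E F).comp π).hasFDerivAt)
  refine hsum.congr_fderiv ?_
  ext v
  simp [WithLp.prod_inner_apply, π]

theorem WithLp.hasDerivAt_toLp_prodMk {u : ℝ → E} {v : ℝ → F} {u' : E} {v' : F} {t : ℝ}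
    (hu : HasDerivAt u u' t) (hv : HasDerivAt v v' t) :
    HasDerivAt (fun t => WithLp.toLp 2 (u t, v t)) (WithLp.toLp 2 (u', v')) t :=
  ((WithLp.prodContinuousLinearEquiv 2 ℝ E F).symm : E × F →L[ℝ] WithLp 2 (E × F))
    |>.hasFDerivAt.comp_hasDerivAt t (hu.prodMk hv)

end ProdL2

theorem hasGradientAt_Fsplit {E : Type*} [NormedAddCommGroup E] [InnerProductSpace ℝ E]
    [CompleteSpace E] {f : E → ℝ} (C : ℝ) {p : WithLp 2 (E × ℝ)}
    (hf : DifferentiableAt ℝ f p.fst) :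
    HasGradientAt (Fsplit f C)
      (WithLp.toLp 2 (gradient f p.fst, C * (3 * p.snd ^ 2 - 3 * p.snd))) p :=
  WithLp.hasGradientAt_fst_add_snd hf.hasGradientAt
    ((hasDerivAt_hfun p.snd).const_mul C).hasGradientAt'

noncomputable def logistic (c t : ℝ) : ℝ := 1 / (1 + Real.exp (-(c * t)))

theorem hasDerivAt_logistic (c t : ℝ) :
    HasDerivAt (logistic c) (c * logistic c t * (1 - logistic c t)) t := by
  have hpos : 0 < 1 + Real.exp (-(c * t)) := by positivity
  have hden : HasDerivAt (fun t => 1 + Real.exp (-(c * t))) (-(c * Real.exp (-(c * t)))) t :=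
    ((((hasDerivAt_id t).const_mul c).neg.exp).const_add 1).congr_deriv (by simp; ring)
  refine ((hasDerivAt_const t (1 : ℝ)).div hden hpos.ne').congr_deriv ?_
  simp only [logistic]
  field_simp
  ring

theorem tendsto_logistic_atBot {c : ℝ} (hc : 0 < c) : Tendsto (logistic c) atBot (𝓝 0) := by
  have : Tendsto (fun t => 1 + Real.exp (-(c * t))) atBot atTop :=
    tendsto_atTop_add_const_left _ 1 <| Real.tendsto_exp_atTop.comp <|
      tendsto_neg_atBot_atTop.comp (tendsto_id.const_mul_atBot hc)
  unfold logistic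
  simp only [one_div]
  exact this.inv_tendsto_atTop

theorem tendsto_logistic_atTop {c : ℝ} (hc : 0 < c) : Tendsto (logistic c) atTop (𝓝 1) := by
  have : Tendsto (fun t => 1 + Real.exp (-(c * t))) atTop (𝓝 (1 + 0)) :=
    tendsto_const_nhds.add <| Real.tendsto_exp_atBot.comp <|
      tendsto_neg_atTop_atBot.comp (tendsto_id.const_mul_atTop hc)
  unfold logistic
  simp only [one_div]
  simpa using this.inv₀ (by norm_num)

/-- For a critical point `x*` of `f`, the curve `γ(t) = (x*, 1/(1 + e^{-3Ct}))` is a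
gradient flow line of the split interpolation function `F` connecting `(x*, 0)` (at
`-∞`) to `(x*, 1)` (at `+∞`); in particular such a connecting flow line exists. -/
theorem flow_line_over_critical_point {E : Type*} [NormedAddCommGroup E]
    [InnerProductSpace ℝ E] [CompleteSpace E]
    (f : E → ℝ) (hf : Differentiable ℝ f) (C : ℝ) (hC : 0 < C)
    (xstar : E) (hx : gradient f xstar = 0)
    (γ : ℝ → WithLp 2 (E × ℝ))
    (hγdef : ∀ t : ℝ, γ t =
      (WithLp.equiv 2 (E × ℝ)).symm (xstar, 1 / (1 + Real.exp (-(3 * C * t))))) :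
    ((∀ t : ℝ, HasDerivAt γ (-(gradient (Fsplit f C) (γ t))) t) ∧
      Tendsto γ atBot (𝓝 ((WithLp.equiv 2 (E × ℝ)).symm (xstar, 0))) ∧
      Tendsto γ atTop (𝓝 ((WithLp.equiv 2 (E × ℝ)).symm (xstar, 1)))) ∧
    (∃ δ : ℝ → WithLp 2 (E × ℝ),
      (∀ t : ℝ, HasDerivAt δ (-(gradient (Fsplit f C) (δ t))) t) ∧
      Tendsto δ atBot (𝓝 ((WithLp.equiv 2 (E × ℝ)).symm (xstar, 0))) ∧
      Tendsto δ atTop (𝓝 ((WithLp.equiv 2 (E × ℝ)).symm (xstar, 1)))) := by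
  set σ := logistic (3 * C)
  obtain rfl : γ = fun t => WithLp.toLp 2 (xstar, σ t) := funext hγdef
  have hflow (t : ℝ) : HasDerivAt (fun t => WithLp.toLp 2 (xstar, σ t))
      (-(gradient (Fsplit f C) (WithLp.toLp 2 (xstar, σ t)))) t := by
    rw [(hasGradientAt_Fsplit C (hf _)).gradient, WithLp.toLp_fst, WithLp.toLp_snd, hx,
      ← WithLp.toLp_neg, Prod.neg_mk, neg_zero]
    exact (WithLp.hasDerivAt_toLp_prodMk (hasDerivAt_const t xstar)
      (hasDerivAt_logistic (3 * C) t)).congr_deriv (by congr 2; ring)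
  have hfibre : Continuous fun s : ℝ => WithLp.toLp 2 (xstar, s) :=
    (WithLp.prod_continuous_toLp 2 E ℝ).comp (continuous_const.prodMk continuous_id)
  have hbot := (hfibre.tendsto 0).comp (tendsto_logistic_atBot (by positivity : 0 < 3 * C))
  have htop := (hfibre.tendsto 1).comp (tendsto_logistic_atTop (by positivity : 0 < 3 * C))
  exact ⟨⟨hflow, hbot, htop⟩, _, hflow, hbot, htop⟩
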